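/- Let n ≥ 1 and let f ∈ C([0,1]) be convex. Then for every x ∈ [0,1], f(x) ≤ S_{Δₙ}f(x) ≤ Bₙf(x); consequently, since 𝔅̄ₙ is a positive operator, 𝔅̄ₙf(x) ≤ 𝔅̄ₙ(S_{Δₙ}f)(x) ≤ 𝔅̄ₙ(Bₙf)(x) for all x ∈ [0,1]. -/

import Mathlib

open MeasureTheory Finset

/-- The Beta operator of Mühlbach and Lupaş on `C[0,1]`. -/
noncomputable def betaOp (n : ℕ) (f : ℝ → ℝ) (x : ℝ) : ℝ :=
  if x = 0 then f 0
  else if x = 1 then f 1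
  else (∫ t in (0:ℝ)..1, t ^ ((n:ℝ) * x - 1) * (1 - t) ^ ((n:ℝ) * (1 - x) - 1) * f t) /
       (∫ t in (0:ℝ)..1, t ^ ((n:ℝ) * x - 1) * (1 - t) ^ ((n:ℝ) * (1 - x) - 1))

/-- The Bernstein operator. -/
noncomputable def bernsteinOp (n : ℕ) (f : ℝ → ℝ) (x : ℝ) : ℝ :=
  ∑ k ∈ Finset.range (n + 1), f ((k : ℝ) / n) * (n.choose k) * x ^ k * (1 - x) ^ (n - k)

/-- The hat function `u_{n,i}` of the piecewise linear interpolation at the nodes `j/n`. -/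
noncomputable def hatFn (n i : ℕ) (x : ℝ) : ℝ := max 0 (1 - |(n : ℝ) * x - i|)

/-- Piecewise linear interpolation at the nodes `0, 1/n, …, 1`. -/
noncomputable def piecewiseLinOp (n : ℕ) (f : ℝ → ℝ) (x : ℝ) : ℝ :=
  ∑ i ∈ Finset.range (n + 1), f ((i : ℝ) / n) * hatFn n i x

/-!
On each cell `[i/n, (i+1)/n]` the interpolant `S_{Δₙ}f` is the secant of `f` through the endpoints
of the cell. A convex function lies below each secant inside the cell and above it outside, in
particular at every node `k/n`. Since `Bₙ` is positive and reproduces affine functions, at a point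
`x` of the cell `Bₙf(x) ≥ Bₙ(secant)(x) = secant(x) = S_{Δₙ}f(x)`. Finally `𝔅̄ₙ` is positive on
continuous functions, its kernel `t^{nx-1}(1-t)^{n(1-x)-1}` being integrable for `n ≥ 1`, so it
preserves both inequalities.
-/

section Secant

variable {𝕜 : Type*} [Field 𝕜] {f : 𝕜 → 𝕜} {a b t : 𝕜}

def secant (f : 𝕜 → 𝕜) (a b t : 𝕜) : 𝕜 := f a + slope f a b * (t - a)

lemma secant_self_right (f : 𝕜 → 𝕜) (hab : b ≠ a) : secant f a b b = f b := by
  rw [secant, slope_def_field]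
  field_simp [sub_ne_zero.2 hab]
  ring

variable [LinearOrder 𝕜] [IsStrictOrderedRing 𝕜] {s : Set 𝕜}

lemma ConvexOn.le_secant (hf : ConvexOn 𝕜 s f) (ha : a ∈ s) (hb : b ∈ s) (ht : t ∈ Set.Icc a b) :
    f t ≤ secant f a b t := by
  rcases eq_or_ne t a with rfl | hta
  · simp [secant]
  have hab : b ≠ a := fun h => hta (le_antisymm (h ▸ ht.2) ht.1)
  have hslope : slope f a t ≤ slope f a b :=
    hf.slope_mono ha ⟨hf.1.ordConnected.out ha hb ht, hta⟩ ⟨hb, hab⟩ ht.2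
  calc f t = secant f a t t := (secant_self_right f hta).symm
    _ ≤ secant f a b t := by unfold secant; gcongr; exact sub_nonneg.2 ht.1

lemma ConvexOn.secant_le (hf : ConvexOn 𝕜 s f) (ha : a ∈ s) (hb : b ∈ s) (hab : a < b)
    (ht : t ∈ s) (hout : t ∉ Set.Ioo a b) : secant f a b t ≤ f t := by
  rcases lt_trichotomy t a with hta | rfl | hat
  · have hslope : slope f a t ≤ slope f a b :=
      hf.slope_mono ha ⟨ht, hta.ne⟩ ⟨hb, hab.ne'⟩ (hta.trans hab).le
    calc secant f a b t ≤ secant f a t t := by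
          unfold secant
          exact add_le_add_right (mul_le_mul_of_nonpos_right hslope (sub_nonpos.2 hta.le)) _
      _ = f t := secant_self_right f hta.ne
  · simp [secant]
  · have hbt : b ≤ t := not_lt.1 fun htb => hout ⟨hat, htb⟩
    have hslope : slope f a b ≤ slope f a t :=
      hf.slope_mono ha ⟨hb, hab.ne'⟩ ⟨ht, hat.ne'⟩ hbt
    calc secant f a b t ≤ secant f a t t := by unfold secant; gcongr
      _ = f t := secant_self_right f hat.ne'

end Secant

section PiecewiseLinear

variable {n i j : ℕ} {x : ℝ}

lemma exists_cell (hn : 0 < n) (hx : x ∈ Set.Icc (0 : ℝ) 1) :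
    ∃ i < n, (i : ℝ) ≤ n * x ∧ n * x ≤ i + 1 := by
  have hnx : 0 ≤ (n : ℝ) * x := mul_nonneg n.cast_nonneg hx.1
  rcases lt_or_ge ⌊(n : ℝ) * x⌋₊ n with hlt | hge
  · exact ⟨_, hlt, Nat.floor_le hnx, (Nat.lt_floor_add_one _).le⟩
  · refine ⟨n - 1, Nat.sub_lt hn one_pos, ?_, ?_⟩
    · have : ((n - 1 : ℕ) : ℝ) ≤ ⌊(n : ℝ) * x⌋₊ := by exact_mod_cast (n.sub_le 1).trans hge
      exact this.trans (Nat.floor_le hnx)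
    · rw [Nat.cast_pred hn, sub_add_cancel]
      exact mul_le_of_le_one_right n.cast_nonneg hx.2

lemma node_mem_Icc {k : ℕ} (hk : k ≤ n) : (k : ℝ) / n ∈ Set.Icc (0 : ℝ) 1 :=
  ⟨by positivity, div_le_one_of_le₀ (by exact_mod_cast hk) n.cast_nonneg⟩

lemma mem_Icc_div_of_le_mul_le (hn : 0 < n) (h₁ : (i : ℝ) ≤ n * x) (h₂ : n * x ≤ i + 1) :
    x ∈ Set.Icc ((i : ℝ) / n) ((i + 1 : ℕ) / n) := by
  have hn' : (0 : ℝ) < n := Nat.cast_pos.2 hn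
  push_cast
  constructor
  · rw [div_le_iff₀ hn']; linarith
  · rw [le_div_iff₀ hn']; linarith

lemma node_notMem_Ioo (hn : 0 < n) (k i : ℕ) :
    (k : ℝ) / n ∉ Set.Ioo ((i : ℝ) / n) ((i + 1 : ℕ) / n) := by
  have hn' : (0 : ℝ) < n := Nat.cast_pos.2 hn
  rintro ⟨hik, hki⟩
  have hik : i < k := by exact_mod_cast (div_lt_div_iff_of_pos_right hn').1 hik
  have hki : k < i + 1 := by exact_mod_cast (div_lt_div_iff_of_pos_right hn').1 hki
  omega

lemma hatFn_of_abs_le (h : |(n : ℝ) * x - j| ≤ 1) : hatFn n j x = 1 - |(n : ℝ) * x - j| :=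
  max_eq_right (sub_nonneg.2 h)

lemma hatFn_of_le_abs (h : 1 ≤ |(n : ℝ) * x - j|) : hatFn n j x = 0 :=
  max_eq_left (sub_nonpos.2 h)

lemma piecewiseLinOp_eq_secant (f : ℝ → ℝ) (hi : i < n) (h₁ : (i : ℝ) ≤ n * x)
    (h₂ : n * x ≤ i + 1) :
    piecewiseLinOp n f x = secant f ((i : ℝ) / n) ((i + 1 : ℕ) / n) x := by
  have hn : (n : ℝ) ≠ 0 := Nat.cast_ne_zero.2 (by omega)
  have hat_i : hatFn n i x = 1 - (n * x - i) := by
    rw [hatFn_of_abs_le] <;> rw [abs_of_nonneg (by linarith)]; linarith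
  have hat_succ : hatFn n (i + 1) x = n * x - i := by
    rw [hatFn_of_abs_le] <;> push_cast <;> rw [abs_of_nonpos (by linarith)]
    · ring
    · linarith
  have hat_other :
      ∀ j ∈ Finset.range (n + 1), j ≠ i ∧ j ≠ i + 1 → f (j / n) * hatFn n j x = 0 := by
    rintro j - ⟨hji, hji'⟩
    rw [hatFn_of_le_abs, mul_zero]
    rcases Nat.lt_or_gt_of_ne hji with hj | hj
    · have : (j : ℝ) + 1 ≤ i := by exact_mod_cast hj
      exact le_abs.2 (Or.inl (by linarith))
    · have : (i : ℝ) + 2 ≤ j := by exact_mod_cast (show i + 2 ≤ j by omega)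
      exact le_abs.2 (Or.inr (by linarith))
  rw [piecewiseLinOp, Finset.sum_eq_add_of_mem i (i + 1) (by simp; omega) (by simp; omega)
    (by omega) hat_other, hat_i, hat_succ, secant, slope_def_field]
  push_cast
  field_simp
  ring

end PiecewiseLinear

section Bernstein

variable {n : ℕ} {x : ℝ}

lemma bernsteinOp_eq_sum_eval (f : ℝ → ℝ) (n : ℕ) (x : ℝ) :
    bernsteinOp n f x =
      ∑ k ∈ Finset.range (n + 1), f (k / n) * (bernsteinPolynomial ℝ n k).eval x := by
  simp only [bernsteinOp, bernsteinPolynomial, Polynomial.eval_mul, Polynomial.eval_natCast,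
    Polynomial.eval_pow, Polynomial.eval_X, Polynomial.eval_sub, Polynomial.eval_one, mul_assoc]

lemma bernsteinOp_affine (hn : 0 < n) (c d x : ℝ) :
    bernsteinOp n (fun t => c + d * t) x = c + d * x := by
  have hsum := congrArg (Polynomial.eval x) (bernsteinPolynomial.sum ℝ n)
  have hmean := congrArg (Polynomial.eval x) (bernsteinPolynomial.sum_smul ℝ n)
  simp only [Polynomial.eval_finsetSum, Polynomial.eval_one, nsmul_eq_mul, Polynomial.eval_mul,
    Polynomial.eval_natCast, Polynomial.eval_X] at hsum hmean
  have hn' : (n : ℝ) ≠ 0 := Nat.cast_ne_zero.2 hn.ne'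
  calc bernsteinOp n (fun t => c + d * t) x
      = c * ∑ k ∈ Finset.range (n + 1), (bernsteinPolynomial ℝ n k).eval x
        + d / n * ∑ k ∈ Finset.range (n + 1), k * (bernsteinPolynomial ℝ n k).eval x := by
        rw [bernsteinOp_eq_sum_eval, Finset.mul_sum, Finset.mul_sum, ← Finset.sum_add_distrib]
        refine Finset.sum_congr rfl fun k _ => ?_
        field_simp
    _ = c + d * x := by rw [hsum, hmean]; field_simp

lemma bernsteinOp_mono {f g : ℝ → ℝ} (hx : x ∈ Set.Icc (0 : ℝ) 1)
    (hfg : ∀ k ≤ n, f (k / n) ≤ g (k / n)) : bernsteinOp n f x ≤ bernsteinOp n g x := by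
  rw [bernsteinOp_eq_sum_eval, bernsteinOp_eq_sum_eval]
  refine Finset.sum_le_sum fun k hk => ?_
  exact mul_le_mul_of_nonneg_right (hfg k (Finset.mem_range_succ_iff.1 hk))
    (bernstein_nonneg (x := ⟨x, hx⟩))

end Bernstein

lemma intervalIntegrable_rpow_mul_one_sub_rpow {p q : ℝ} (hp : -1 < p) (hq : -1 < q) :
    IntervalIntegrable (fun t : ℝ => t ^ p * (1 - t) ^ q) volume 0 1 := by
  have h := (Complex.betaIntegral_convergent (u := p + 1) (v := q + 1)
    (by simp; linarith) (by simp; linarith)).norm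
  refine h.congr_uIoo fun t ht => ?_
  rw [Set.uIoo_of_le zero_le_one] at ht
  dsimp only
  rw [norm_mul, ← Complex.ofReal_one, ← Complex.ofReal_sub,
    Complex.norm_cpow_eq_rpow_re_of_pos ht.1, Complex.norm_cpow_eq_rpow_re_of_pos (sub_pos.2 ht.2)]
  simp

lemma betaOp_mono {n : ℕ} (hn : 0 < n) {f g : ℝ → ℝ} (hf : ContinuousOn f (Set.Icc 0 1))
    (hg : ContinuousOn g (Set.Icc 0 1)) (hfg : ∀ t ∈ Set.Icc (0 : ℝ) 1, f t ≤ g t) {x : ℝ}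
    (hx : x ∈ Set.Icc (0 : ℝ) 1) : betaOp n f x ≤ betaOp n g x := by
  unfold betaOp
  split_ifs with h0 h1
  · exact hfg 0 (Set.left_mem_Icc.2 zero_le_one)
  · exact hfg 1 (Set.right_mem_Icc.2 zero_le_one)
  have hnx : 0 < (n : ℝ) * x := mul_pos (Nat.cast_pos.2 hn) (hx.1.lt_of_ne' h0)
  have hnx' : 0 < (n : ℝ) * (1 - x) := mul_pos (Nat.cast_pos.2 hn) (sub_pos.2 (hx.2.lt_of_ne h1))
  have hw := intervalIntegrable_rpow_mul_one_sub_rpow (p := n * x - 1) (q := n * (1 - x) - 1)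
    (by linarith) (by linarith)
  have hw_pos :
      0 < ∫ t in (0 : ℝ)..1, t ^ ((n : ℝ) * x - 1) * (1 - t) ^ ((n : ℝ) * (1 - x) - 1) :=
    intervalIntegral.intervalIntegral_pos_of_pos_on hw
      (fun t ht => mul_pos (Real.rpow_pos_of_pos ht.1 _) (Real.rpow_pos_of_pos (sub_pos.2 ht.2) _))
      one_pos
  rw [← Set.uIcc_of_le zero_le_one] at hf hg
  gcongr ?_ / _
  refine intervalIntegral.integral_mono_on zero_le_one (hw.mul_continuousOn hf)
    (hw.mul_continuousOn hg) fun t ht => ?_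
  exact mul_le_mul_of_nonneg_left (hfg t ht)
    (mul_nonneg (Real.rpow_nonneg ht.1 _) (Real.rpow_nonneg (sub_nonneg.2 ht.2) _))

lemma continuous_piecewiseLinOp (n : ℕ) (f : ℝ → ℝ) : Continuous (piecewiseLinOp n f) := by
  unfold piecewiseLinOp hatFn
  fun_prop

lemma continuous_bernsteinOp (n : ℕ) (f : ℝ → ℝ) : Continuous (bernsteinOp n f) := by
  unfold bernsteinOp
  fun_prop

section Convex

variable {n : ℕ} {f : ℝ → ℝ} {x : ℝ}

lemma ConvexOn.le_piecewiseLinOp (hf : ConvexOn ℝ (Set.Icc 0 1) f) (hn : 0 < n)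
    (hx : x ∈ Set.Icc (0 : ℝ) 1) : f x ≤ piecewiseLinOp n f x := by
  obtain ⟨i, hi, h₁, h₂⟩ := exists_cell hn hx
  rw [piecewiseLinOp_eq_secant f hi h₁ h₂]
  exact hf.le_secant (node_mem_Icc hi.le) (node_mem_Icc hi) (mem_Icc_div_of_le_mul_le hn h₁ h₂)

lemma ConvexOn.piecewiseLinOp_le_bernsteinOp (hf : ConvexOn ℝ (Set.Icc 0 1) f) (hn : 0 < n)
    (hx : x ∈ Set.Icc (0 : ℝ) 1) : piecewiseLinOp n f x ≤ bernsteinOp n f x := by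
  obtain ⟨i, hi, h₁, h₂⟩ := exists_cell hn hx
  set a : ℝ := i / n
  set b : ℝ := (i + 1 : ℕ) / n
  have hab : a < b := div_lt_div_of_pos_right (by simp) (Nat.cast_pos.2 hn)
  have haffine : secant f a b = fun t => (f a - slope f a b * a) + slope f a b * t := by
    funext t; simp only [secant]; ring
  calc piecewiseLinOp n f x = bernsteinOp n (secant f a b) x := by
        rw [piecewiseLinOp_eq_secant f hi h₁ h₂, haffine, bernsteinOp_affine hn]
    _ ≤ bernsteinOp n f x := by
        exact bernsteinOp_mono hx fun k hk => hf.secant_le (node_mem_Icc hi.le)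
          (node_mem_Icc hi) hab (node_mem_Icc hk) (node_notMem_Ioo hn k i)

end Convex

/-- For convex `f ∈ C[0,1]`: `f ≤ S_{Δₙ}f ≤ Bₙf`, and consequently
`𝔅̄ₙf ≤ 𝔅̄ₙ(S_{Δₙ}f) ≤ 𝔅̄ₙ(Bₙf)` on `[0,1]`. -/
theorem convex_interpolation_inequalities (n : ℕ) (hn : 1 ≤ n) (f : ℝ → ℝ)
    (hf : ContinuousOn f (Set.Icc 0 1)) (hconv : ConvexOn ℝ (Set.Icc (0:ℝ) 1) f) :
    ∀ x ∈ Set.Icc (0:ℝ) 1,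
      f x ≤ piecewiseLinOp n f x ∧
      piecewiseLinOp n f x ≤ bernsteinOp n f x ∧
      betaOp n f x ≤ betaOp n (piecewiseLinOp n f) x ∧
      betaOp n (piecewiseLinOp n f) x ≤ betaOp n (bernsteinOp n f) x := by
  intro x hx
  have hS_cont := (continuous_piecewiseLinOp n f).continuousOn (s := Set.Icc 0 1)
  have hB_cont := (continuous_bernsteinOp n f).continuousOn (s := Set.Icc 0 1)
  exact ⟨hconv.le_piecewiseLinOp hn hx, hconv.piecewiseLinOp_le_bernsteinOp hn hx,
    betaOp_mono hn hf hS_cont (fun t ht => hconv.le_piecewiseLinOp hn ht) hx,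
    betaOp_mono hn hS_cont hB_cont (fun t ht => hconv.piecewiseLinOp_le_bernsteinOp hn ht) hx⟩
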